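/- For every L ≥ 1 there exists a constant c₁(L) > 0 depending only on L such that the following holds. Let X be a centered random vector in ℝ^d satisfying the L₄–L₂ norm equivalence with constant L, with covariance Σ. For α > 0 let Z = X·1_{‖X‖₂ ≤ α} and let B = 𝔼((Z⊗Z)²) (the expectation of the square of the rank-one matrix Z Zᵀ). Then ‖B‖ ≤ c₁(L) ‖Σ‖ Tr(Σ) and Tr(B) ≤ c₁(L) (Tr(Σ))². -/

import Mathlib

open MeasureTheory ProbabilityTheory
open scoped RealInnerProductSpace

/-- The ℓ₂→ℓ₂ operator norm of a `d × d` real matrix. -/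
noncomputable def matOpNorm {d : ℕ} (A : Matrix (Fin d) (Fin d) ℝ) : ℝ :=
  ‖Matrix.toEuclideanCLM (𝕜 := ℝ) (n := Fin d) A‖

/-- The outer product `z zᵀ` of a vector with itself. -/
noncomputable def outerMat {d : ℕ} (z : EuclideanSpace ℝ (Fin d)) :
    Matrix (Fin d) (Fin d) ℝ := Matrix.of fun i j => z i * z j

/-- Covariance-type matrix `𝔼 (X ⊗ X)` of a random vector. -/
noncomputable def covMat {Ω : Type*} [MeasurableSpace Ω] (P : Measure Ω) {d : ℕ}
    (X : Ω → EuclideanSpace ℝ (Fin d)) : Matrix (Fin d) (Fin d) ℝ :=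
  Matrix.of fun i j => ∫ ω, X ω i * X ω j ∂P

/-- Effective rank `Tr(A)/‖A‖`. -/
noncomputable def effRank {d : ℕ} (A : Matrix (Fin d) (Fin d) ℝ) : ℝ :=
  A.trace / matOpNorm A

/-- The squared weak variance `R_Z² = sup_{u,v ∈ S^{d-1}} 𝔼 (vᵀ (Z⊗Z - 𝔼 Z⊗Z) u)²`. -/
noncomputable def weakVarSq {Ω : Type*} [MeasurableSpace Ω] (P : Measure Ω) {d : ℕ}
    (Z : Ω → EuclideanSpace ℝ (Fin d)) : ℝ :=
  ⨆ p : Metric.sphere (0 : EuclideanSpace ℝ (Fin d)) 1 ×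
        Metric.sphere (0 : EuclideanSpace ℝ (Fin d)) 1,
    ∫ ω, (∑ i, ∑ j,
      (p.2 : EuclideanSpace ℝ (Fin d)) i * (Z ω i * Z ω j - covMat P Z i j) *
      (p.1 : EuclideanSpace ℝ (Fin d)) j) ^ 2 ∂P

/-- The weak variance `R_Z`. -/
noncomputable def weakVar {Ω : Type*} [MeasurableSpace Ω] (P : Measure Ω) {d : ℕ}
    (Z : Ω → EuclideanSpace ℝ (Fin d)) : ℝ :=
  Real.sqrt (weakVarSq P Z)

/-- Truncation `X 1_{‖X‖₂ ≤ α}`. -/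
noncomputable def trunc {Ω : Type*} {d : ℕ} (X : Ω → EuclideanSpace ℝ (Fin d)) (α : ℝ) :
    Ω → EuclideanSpace ℝ (Fin d) := fun ω => if ‖X ω‖ ≤ α then X ω else 0

/-- `X` is a centered random vector. -/
def IsCentered {Ω : Type*} [MeasurableSpace Ω] (P : Measure Ω) {d : ℕ}
    (X : Ω → EuclideanSpace ℝ (Fin d)) : Prop :=
  ∀ i : Fin d, ∫ ω, X ω i ∂P = 0

/-- `X` is `L`-subgaussian: all moments exist and
`(𝔼|⟨X,t⟩|^p)^{1/p} ≤ L √p (𝔼⟨X,t⟩²)^{1/2}` for all `t` and `p ≥ 2`. -/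
def IsLSubgaussian {Ω : Type*} [MeasurableSpace Ω] (P : Measure Ω) {d : ℕ}
    (X : Ω → EuclideanSpace ℝ (Fin d)) (L : ℝ) : Prop :=
  ∀ t : EuclideanSpace ℝ (Fin d), ∀ p : ℝ, 2 ≤ p →
    Integrable (fun ω => |⟪X ω, t⟫| ^ p) P ∧
    (∫ ω, |⟪X ω, t⟫| ^ p ∂P) ^ (1 / p) ≤
      L * Real.sqrt p * (∫ ω, ⟪X ω, t⟫ ^ 2 ∂P) ^ ((1 : ℝ) / 2)

/-- A centered `X` satisfies `L₄-L₂` norm equivalence with constant `L`: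
fourth moments exist and `(𝔼⟨X,t⟩⁴)^{1/4} ≤ L (𝔼⟨X,t⟩²)^{1/2}` for all `t`. -/
def SatisfiesL4L2 {Ω : Type*} [MeasurableSpace Ω] (P : Measure Ω) {d : ℕ}
    (X : Ω → EuclideanSpace ℝ (Fin d)) (L : ℝ) : Prop :=
  ∀ t : EuclideanSpace ℝ (Fin d),
    Integrable (fun ω => ⟪X ω, t⟫ ^ 4) P ∧
    (∫ ω, ⟪X ω, t⟫ ^ 4 ∂P) ^ ((1 : ℝ) / 4) ≤
      L * (∫ ω, ⟪X ω, t⟫ ^ 2 ∂P) ^ ((1 : ℝ) / 2)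

/-- `Xi` is a sequence of independent copies of `X`. -/
def IIDCopies {Ω : Type*} [MeasurableSpace Ω] (P : Measure Ω) {d N : ℕ}
    (X : Ω → EuclideanSpace ℝ (Fin d)) (Xi : Fin N → Ω → EuclideanSpace ℝ (Fin d)) : Prop :=
  (∀ i, Measurable (Xi i)) ∧ iIndepFun Xi P ∧
    ∀ i, Measure.map (Xi i) P = Measure.map X P

/-!
Since `(Z⊗Z)² = ‖Z‖² Z⊗Z`, the quadratic form of `B` is
`⟨B u, u⟩ = 𝔼 ‖Z‖² ⟨Z,u⟩² = ∑ᵢ 𝔼 ⟨Z,eᵢ⟩² ⟨Z,u⟩²`. By Cauchy–Schwarz each summand is at most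
`√(𝔼 ⟨Z,eᵢ⟩⁴) √(𝔼 ⟨Z,u⟩⁴)`; truncation only decreases fourth moments, so the `L₄–L₂` norm
equivalence bounds this by `L⁴ Σᵢᵢ ⟨Σ u, u⟩`. Hence `⟨B u, u⟩ ≤ L⁴ Tr(Σ) ⟨Σ u, u⟩`: as `B` is
symmetric this gives `‖B‖ ≤ L⁴ ‖Σ‖ Tr(Σ)`, and summing over `u = e_k` gives
`Tr(B) ≤ L⁴ Tr(Σ)²`.
-/

open Matrix
open scoped ENNReal

section Moments

variable {Ω : Type*} [MeasurableSpace Ω] {P : Measure Ω}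

theorem integral_mul_le_sqrt_mul_sqrt {f g : Ω → ℝ} (hf : MemLp f 2 P) (hg : MemLp g 2 P) :
    ∫ ω, f ω * g ω ∂P ≤ √(∫ ω, f ω ^ 2 ∂P) * √(∫ ω, g ω ^ 2 ∂P) := by
  have holder := integral_mul_le_Lp_mul_Lq_of_nonneg Real.HolderConjugate.two_two
    (ae_of_all _ fun ω => abs_nonneg (f ω)) (ae_of_all _ fun ω => abs_nonneg (g ω))
    (by rw [ENNReal.ofReal_ofNat]; exact hf.abs) (by rw [ENNReal.ofReal_ofNat]; exact hg.abs)
  simp only [Real.rpow_two, sq_abs, ← Real.sqrt_eq_rpow] at holder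
  refine le_trans (integral_mono (hf.integrable_mul hg) (hf.abs.integrable_mul hg.abs)
    fun ω => ?_) holder
  simpa only [Pi.mul_apply, Pi.abs_apply, abs_mul] using le_abs_self (f ω * g ω)

theorem memLp_two_of_integrable_pow_four [IsFiniteMeasure P] {f : Ω → ℝ}
    (hf : AEStronglyMeasurable f P) (h4 : Integrable (fun ω => f ω ^ 4) P) : MemLp f 2 P := by
  have hf4 : MemLp f 4 P := by
    refine (integrable_norm_rpow_iff hf (by norm_num) (by norm_num)).1 ?_
    simpa [Real.norm_eq_abs, Even.pow_abs ⟨2, rfl⟩] using h4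
  exact hf4.mono_exponent (by norm_num)

theorem memLp_comp_of_forall_norm_le [IsFiniteMeasure P] {E F : Type*} [NormedAddCommGroup E]
    [ProperSpace E] [MeasurableSpace E] [BorelSpace E] [NormedAddCommGroup F] {Z : Ω → E}
    (hZ : Measurable Z) {α : ℝ} (hα : ∀ ω, ‖Z ω‖ ≤ α) {g : E → F} (hg : Continuous g)
    (p : ℝ≥0∞) : MemLp (fun ω => g (Z ω)) p P := by
  obtain ⟨C, hC⟩ := (isCompact_closedBall (0 : E) α).exists_bound_of_continuousOn hg.continuousOn
  exact .of_bound (hg.comp_aestronglyMeasurable hZ.aestronglyMeasurable) C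
    (ae_of_all _ fun ω => hC _ (mem_closedBall_zero_iff.2 (hα ω)))

end Moments

section Matrices

theorem dotProduct_integral_mulVec {Ω : Type*} [MeasurableSpace Ω] {P : Measure Ω}
    {n : Type*} [Fintype n] {M : Ω → Matrix n n ℝ}
    (hM : ∀ i j, Integrable (fun ω => M ω i j) P) (u v : n → ℝ) :
    u ⬝ᵥ (Matrix.of fun i j => ∫ ω, M ω i j ∂P) *ᵥ v = ∫ ω, u ⬝ᵥ M ω *ᵥ v ∂P := by
  have hrow : ∀ i, Integrable (fun ω => ∑ j, M ω i j * v j) P := fun i =>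
    integrable_finsetSum _ fun j _ => (hM i j).mul_const _
  simp only [dotProduct, mulVec, of_apply]
  rw [integral_finsetSum _ fun i _ => (hrow i).const_mul _]
  refine Finset.sum_congr rfl fun i _ => ?_
  rw [integral_const_mul, integral_finsetSum _ fun j _ => (hM i j).mul_const _]
  simp only [integral_mul_const]

theorem isHermitian_integral {Ω : Type*} [MeasurableSpace Ω] {P : Measure Ω}
    {n : Type*} {M : Ω → Matrix n n ℝ} (hM : ∀ ω, (M ω).IsHermitian) :
    (Matrix.of fun i j => ∫ ω, M ω i j ∂P).IsHermitian := by
  ext i j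
  simp only [conjTranspose_apply, of_apply, star_trivial]
  exact integral_congr_ae (ae_of_all _ fun ω => (hM ω).apply i j)

theorem trace_eq_sum_dotProduct_mulVec_single {n : Type*} [Fintype n] [DecidableEq n]
    (A : Matrix n n ℝ) :
    A.trace = ∑ k, (EuclideanSpace.single k 1).ofLp ⬝ᵥ A *ᵥ (EuclideanSpace.single k 1).ofLp := by
  simp [Matrix.trace]

variable {d : ℕ}

theorem dotProduct_mulVec_le_matOpNorm (A : Matrix (Fin d) (Fin d) ℝ)
    (u : EuclideanSpace ℝ (Fin d)) : u.ofLp ⬝ᵥ A *ᵥ u.ofLp ≤ matOpNorm A * ‖u‖ ^ 2 := by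
  rw [← inner_toEuclideanCLM]
  calc ⟪u, toEuclideanCLM (𝕜 := ℝ) A u⟫ ≤ ‖u‖ * ‖toEuclideanCLM (𝕜 := ℝ) A u‖ :=
        real_inner_le_norm _ _
    _ ≤ ‖u‖ * (matOpNorm A * ‖u‖) := by gcongr; exact ContinuousLinearMap.le_opNorm _ _
    _ = matOpNorm A * ‖u‖ ^ 2 := by ring

theorem matOpNorm_le_of_abs_dotProduct_mulVec_le {A : Matrix (Fin d) (Fin d) ℝ}
    (hA : A.IsHermitian) {C : ℝ} (hC : 0 ≤ C)
    (h : ∀ u : EuclideanSpace ℝ (Fin d), |u.ofLp ⬝ᵥ A *ᵥ u.ofLp| ≤ C * ‖u‖ ^ 2) :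
    matOpNorm A ≤ C := by
  rw [matOpNorm, ContinuousLinearMap.norm_eq_iSup_rayleighQuotient _
    (isSymmetric_toEuclideanLin_iff.2 hA)]
  refine ciSup_le fun u => ?_
  rcases eq_or_ne u 0 with rfl | hu
  · simpa using hC
  rw [ContinuousLinearMap.rayleighQuotient, ContinuousLinearMap.reApplyInnerSelf_apply,
    abs_div, abs_sq, div_le_iff₀ (by positivity), real_inner_comm]
  simpa [inner_toEuclideanCLM] using h u

theorem outerMat_mul_self (z : EuclideanSpace ℝ (Fin d)) :
    outerMat z * outerMat z = (‖z‖ ^ 2) • outerMat z := by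
  ext i j
  simp only [outerMat, mul_apply, of_apply, Matrix.smul_apply, smul_eq_mul,
    EuclideanSpace.norm_sq_eq, Real.norm_eq_abs, sq_abs, Finset.sum_mul]
  exact Finset.sum_congr rfl fun k _ => by ring

theorem isHermitian_outerMat (z : EuclideanSpace ℝ (Fin d)) : (outerMat z).IsHermitian := by
  ext i j
  simp [outerMat, mul_comm]

theorem dotProduct_outerMat_mulVec (z u v : EuclideanSpace ℝ (Fin d)) :
    u.ofLp ⬝ᵥ outerMat z *ᵥ v.ofLp = ⟪z, u⟫ * ⟪z, v⟫ := by
  simp only [dotProduct, mulVec, outerMat, of_apply, PiLp.inner_apply, RCLike.inner_apply,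
    conj_trivial]
  rw [Finset.sum_mul_sum]
  simp only [Finset.mul_sum]
  exact Finset.sum_congr rfl fun i _ => Finset.sum_congr rfl fun j _ => by ring

end Matrices

section Covariance

variable {Ω : Type*} [MeasurableSpace Ω] {P : Measure Ω} {d : ℕ}

theorem dotProduct_covMat_mulVec {X : Ω → EuclideanSpace ℝ (Fin d)}
    (hX : ∀ i, MemLp (fun ω => X ω i) 2 P) (u : EuclideanSpace ℝ (Fin d)) :
    u.ofLp ⬝ᵥ covMat P X *ᵥ u.ofLp = ∫ ω, ⟪X ω, u⟫ ^ 2 ∂P := by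
  have := dotProduct_integral_mulVec (M := fun ω => outerMat (X ω))
    (fun i j => (hX i).integrable_mul (hX j)) u.ofLp u.ofLp
  simp only [dotProduct_outerMat_mulVec, ← sq] at this
  exact this

theorem trace_covMat (X : Ω → EuclideanSpace ℝ (Fin d)) :
    (covMat P X).trace = ∑ i, ∫ ω, ⟪X ω, EuclideanSpace.single i 1⟫ ^ 2 ∂P := by
  simp [Matrix.trace, covMat, EuclideanSpace.inner_single_right, sq]

theorem SatisfiesL4L2.memLp_two_apply [IsFiniteMeasure P] {X : Ω → EuclideanSpace ℝ (Fin d)}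
    {L : ℝ} (h : SatisfiesL4L2 P X L) (hX : Measurable X) (i : Fin d) :
    MemLp (fun ω => X ω i) 2 P :=
  memLp_two_of_integrable_pow_four (by fun_prop)
    (by simpa [EuclideanSpace.inner_single_right] using (h (EuclideanSpace.single i 1)).1)

theorem SatisfiesL4L2.sqrt_integral_inner_pow_four_le {X : Ω → EuclideanSpace ℝ (Fin d)}
    {L : ℝ} (h : SatisfiesL4L2 P X L) (u : EuclideanSpace ℝ (Fin d)) :
    √(∫ ω, ⟪X ω, u⟫ ^ 4 ∂P) ≤ L ^ 2 * ∫ ω, ⟪X ω, u⟫ ^ 2 ∂P := by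
  have ha : 0 ≤ ∫ ω, ⟪X ω, u⟫ ^ 4 ∂P := integral_nonneg fun ω => by positivity
  have hb : 0 ≤ ∫ ω, ⟪X ω, u⟫ ^ 2 ∂P := integral_nonneg fun ω => sq_nonneg _
  calc √(∫ ω, ⟪X ω, u⟫ ^ 4 ∂P) = ((∫ ω, ⟪X ω, u⟫ ^ 4 ∂P) ^ (1 / 4 : ℝ)) ^ 2 := by
        rw [Real.sqrt_eq_rpow, ← Real.rpow_natCast, ← Real.rpow_mul ha]; norm_num
    _ ≤ (L * (∫ ω, ⟪X ω, u⟫ ^ 2 ∂P) ^ (1 / 2 : ℝ)) ^ 2 :=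
        pow_le_pow_left₀ (by positivity) (h u).2 2
    _ = L ^ 2 * ∫ ω, ⟪X ω, u⟫ ^ 2 ∂P := by
        rw [mul_pow, ← Real.sqrt_eq_rpow, Real.sq_sqrt hb]

end Covariance

section Truncation

variable {Ω : Type*} {d : ℕ}

theorem norm_trunc_le (X : Ω → EuclideanSpace ℝ (Fin d)) {α : ℝ} (hα : 0 ≤ α) (ω : Ω) :
    ‖trunc X α ω‖ ≤ α := by
  unfold trunc
  split_ifs <;> simp_all

theorem abs_inner_trunc_le (X : Ω → EuclideanSpace ℝ (Fin d)) (α : ℝ) (ω : Ω)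
    (u : EuclideanSpace ℝ (Fin d)) : |⟪trunc X α ω, u⟫| ≤ |⟪X ω, u⟫| := by
  unfold trunc
  split_ifs <;> simp

variable [MeasurableSpace Ω]

theorem measurable_trunc {X : Ω → EuclideanSpace ℝ (Fin d)} (hX : Measurable X) (α : ℝ) :
    Measurable (trunc X α) :=
  Measurable.ite (measurableSet_le hX.norm measurable_const) hX measurable_const

theorem integral_inner_trunc_pow_four_le {P : Measure Ω} {X : Ω → EuclideanSpace ℝ (Fin d)}
    {u : EuclideanSpace ℝ (Fin d)} (hX : Integrable (fun ω => ⟪X ω, u⟫ ^ 4) P) (α : ℝ) :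
    ∫ ω, ⟪trunc X α ω, u⟫ ^ 4 ∂P ≤ ∫ ω, ⟪X ω, u⟫ ^ 4 ∂P :=
  integral_mono_of_nonneg (ae_of_all _ fun ω => by positivity) hX (ae_of_all _ fun ω => by
    simpa [Even.pow_abs ⟨2, rfl⟩] using
      pow_le_pow_left₀ (abs_nonneg _) (abs_inner_trunc_le X α ω u) 4)

end Truncation

section TruncatedSecondMoment

variable {Ω : Type*} [MeasurableSpace Ω] {P : Measure Ω} [IsFiniteMeasure P] {d : ℕ}
  {Z : Ω → EuclideanSpace ℝ (Fin d)} {α : ℝ}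

theorem integral_norm_sq_mul_inner_sq_le (hZ : Measurable Z) (hα : ∀ ω, ‖Z ω‖ ≤ α)
    {q : EuclideanSpace ℝ (Fin d) → ℝ} (hq : ∀ u, √(∫ ω, ⟪Z ω, u⟫ ^ 4 ∂P) ≤ q u)
    (u : EuclideanSpace ℝ (Fin d)) :
    ∫ ω, ‖Z ω‖ ^ 2 * ⟪Z ω, u⟫ ^ 2 ∂P ≤ (∑ i, q (EuclideanSpace.single i 1)) * q u := by
  have hsq : ∀ v, MemLp (fun ω => ⟪Z ω, v⟫ ^ 2) 2 P := fun v =>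
    memLp_comp_of_forall_norm_le hZ hα (g := fun z => ⟪z, v⟫ ^ 2) (by fun_prop) 2
  have hCS : ∀ v, ∫ ω, ⟪Z ω, v⟫ ^ 2 * ⟪Z ω, u⟫ ^ 2 ∂P ≤ q v * q u := fun v => by
    refine (integral_mul_le_sqrt_mul_sqrt (hsq v) (hsq u)).trans ?_
    simp only [← pow_mul]
    exact mul_le_mul (hq v) (hq u) (Real.sqrt_nonneg _) ((Real.sqrt_nonneg _).trans (hq v))
  have hnorm : ∀ z : EuclideanSpace ℝ (Fin d),
      ‖z‖ ^ 2 = ∑ i, ⟪z, EuclideanSpace.single i 1⟫ ^ 2 := by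
    simp [EuclideanSpace.norm_sq_eq, EuclideanSpace.inner_single_right]
  simp_rw [hnorm, Finset.sum_mul]
  rw [integral_finsetSum _ fun i _ => by exact (hsq _).integrable_mul (hsq u)]
  exact Finset.sum_le_sum fun i _ => hCS _

theorem dotProduct_integral_outerMat_mul_self_mulVec (hZ : Measurable Z)
    (hα : ∀ ω, ‖Z ω‖ ≤ α) (u : EuclideanSpace ℝ (Fin d)) :
    u.ofLp ⬝ᵥ (Matrix.of fun i j => ∫ ω, (outerMat (Z ω) * outerMat (Z ω)) i j ∂P) *ᵥ u.ofLp =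
      ∫ ω, ‖Z ω‖ ^ 2 * ⟪Z ω, u⟫ ^ 2 ∂P := by
  have hM : ∀ i j, Integrable (fun ω => (outerMat (Z ω) * outerMat (Z ω)) i j) P := by
    intro i j
    simp only [outerMat_mul_self, Matrix.smul_apply, smul_eq_mul]
    simp only [outerMat, Matrix.of_apply]
    exact memLp_one_iff_integrable.1 <|
      memLp_comp_of_forall_norm_le hZ hα (g := fun z => ‖z‖ ^ 2 * (z i * z j)) (by fun_prop) 1
  rw [dotProduct_integral_mulVec hM]
  simp only [outerMat_mul_self, Matrix.smul_mulVec, dotProduct_smul, dotProduct_outerMat_mulVec,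
    smul_eq_mul, sq]

end TruncatedSecondMoment

/-- For every `L ≥ 1` there is `c₁(L) > 0` such that for any centered `X` satisfying the
`L₄-L₂` norm equivalence with constant `L` and any `α > 0`, the matrix
`B = 𝔼((Z⊗Z)²)` of the truncation `Z = X 1_{‖X‖₂ ≤ α}` satisfies
`‖B‖ ≤ c₁(L) ‖Σ‖ Tr(Σ)` and `Tr(B) ≤ c₁(L) (Tr Σ)²`. -/
theorem second_moment_matrix_bounds :
    ∀ L : ℝ, 1 ≤ L → ∃ c₁ : ℝ, 0 < c₁ ∧
      ∀ (Ω : Type*) [MeasurableSpace Ω] (P : Measure Ω) [IsProbabilityMeasure P]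
        (d : ℕ) (X : Ω → EuclideanSpace ℝ (Fin d)),
        Measurable X → IsCentered P X → SatisfiesL4L2 P X L →
        ∀ α : ℝ, 0 < α →
          matOpNorm (Matrix.of fun i j =>
              ∫ ω, (outerMat (trunc X α ω) * outerMat (trunc X α ω)) i j ∂P) ≤
            c₁ * matOpNorm (covMat P X) * (covMat P X).trace ∧
          (Matrix.of fun i j =>
              ∫ ω, (outerMat (trunc X α ω) * outerMat (trunc X α ω)) i j ∂P).trace ≤
            c₁ * (covMat P X).trace ^ 2 := by
  intro L _
  refine ⟨L ^ 4, by positivity, ?_⟩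
  intro Ω _ P _ d X hX _ hL4 α hα
  set Z := trunc X α
  have hZ : Measurable Z := measurable_trunc hX α
  have hZα : ∀ ω, ‖Z ω‖ ≤ α := norm_trunc_le X hα.le
  have hZ4 : ∀ u, √(∫ ω, ⟪Z ω, u⟫ ^ 4 ∂P) ≤ L ^ 2 * ∫ ω, ⟪X ω, u⟫ ^ 2 ∂P := fun u =>
    (Real.sqrt_le_sqrt (integral_inner_trunc_pow_four_le (hL4 u).1 α)).trans
      (hL4.sqrt_integral_inner_pow_four_le u)
  have hkey : ∀ u, ∫ ω, ‖Z ω‖ ^ 2 * ⟪Z ω, u⟫ ^ 2 ∂P ≤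
      L ^ 4 * (covMat P X).trace * ∫ ω, ⟪X ω, u⟫ ^ 2 ∂P := fun u => by
    have := integral_norm_sq_mul_inner_sq_le hZ hZα hZ4 u
    rw [← Finset.mul_sum, ← trace_covMat] at this
    linarith
  have htr : 0 ≤ (covMat P X).trace := by
    rw [trace_covMat]
    exact Finset.sum_nonneg fun i _ => integral_nonneg fun ω => sq_nonneg _
  constructor
  · refine matOpNorm_le_of_abs_dotProduct_mulVec_le
      (isHermitian_integral fun ω => by simpa only [sq] using (isHermitian_outerMat (Z ω)).pow 2)
      (mul_nonneg (mul_nonneg (by positivity) (norm_nonneg _)) htr) fun u => ?_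
    rw [dotProduct_integral_outerMat_mul_self_mulVec hZ hZα,
      abs_of_nonneg (integral_nonneg fun ω => by positivity)]
    calc _ ≤ L ^ 4 * (covMat P X).trace * ∫ ω, ⟪X ω, u⟫ ^ 2 ∂P := hkey u
      _ ≤ L ^ 4 * (covMat P X).trace * (matOpNorm (covMat P X) * ‖u‖ ^ 2) := by
        rw [← dotProduct_covMat_mulVec (hL4.memLp_two_apply hX)]
        gcongr
        exact dotProduct_mulVec_le_matOpNorm _ _
      _ = _ := by ring
  · rw [trace_eq_sum_dotProduct_mulVec_single]
    simp only [dotProduct_integral_outerMat_mul_self_mulVec hZ hZα]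
    calc _ ≤ ∑ k, L ^ 4 * (covMat P X).trace *
          ∫ ω, ⟪X ω, EuclideanSpace.single k 1⟫ ^ 2 ∂P := Finset.sum_le_sum fun k _ => hkey _
      _ = _ := by rw [← Finset.mul_sum, ← trace_covMat]; ring
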